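/- Let η ∈ ℂ and let λ₁, λ₂, λ₃ ∈ ℂ satisfy sinh(λᵢ−λⱼ+η) ≠ 0 for all 1 ≤ i < j ≤ 3. Then on (ℂ²)^{⊗3} the asymmetric R-matrices satisfy the Yang–Baxter equation R^±₁₂(λ₁−λ₂) R^±₁₃(λ₁−λ₃) R^±₂₃(λ₂−λ₃) = R^±₂₃(λ₂−λ₃) R^±₁₃(λ₁−λ₃) R^±₁₂(λ₁−λ₂), for both choices of sign. -/

import Mathlib

open Matrix Complex Finset Filter

noncomputable section

abbrev M4 : Type := Matrix (Fin 2 × Fin 2) (Fin 2 × Fin 2) ℂ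

/-- `b(u) = sinh u / sinh (u + η)` -/
def bC (η u : ℂ) : ℂ := Complex.sinh u / Complex.sinh (u + η)

/-- `c(u) = sinh η / sinh (u + η)` -/
def cC (η u : ℂ) : ℂ := Complex.sinh η / Complex.sinh (u + η)

/-- `c⁺(u) = e^u sinh η / sinh (u + η)` -/
def cP (η u : ℂ) : ℂ := Complex.exp u * Complex.sinh η / Complex.sinh (u + η)

/-- `c⁻(u) = e^{-u} sinh η / sinh (u + η)` -/
def cM (η u : ℂ) : ℂ := Complex.exp (-u) * Complex.sinh η / Complex.sinh (u + η)

/-- The symmetric R-matrix on `ℂ² ⊗ ℂ²`. -/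
def Rsym (η u : ℂ) : M4 := Matrix.of fun a b =>
  if a = b then (if a.1 = a.2 then 1 else bC η u)
  else if a.1 = b.2 ∧ a.2 = b.1 then cC η u else 0

/-- The asymmetric R-matrix `R⁺` on `ℂ² ⊗ ℂ²`. -/
def Rplus (η u : ℂ) : M4 := Matrix.of fun a b =>
  if a = b then (if a.1 = a.2 then 1 else bC η u)
  else if a.1 = b.2 ∧ a.2 = b.1 then (if a.1 = 1 then cP η u else cM η u) else 0

/-- The asymmetric R-matrix `R⁻` on `ℂ² ⊗ ℂ²`, obtained from `R⁺`
by interchanging `c⁺` and `c⁻`. -/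
def Rminus (η u : ℂ) : M4 := Matrix.of fun a b =>
  if a = b then (if a.1 = a.2 then 1 else bC η u)
  else if a.1 = b.2 ∧ a.2 = b.1 then (if a.1 = 1 then cM η u else cP η u) else 0

/-- `emb2 N j k X` is the operator `X_{jk}` on `(ℂ²)^{⊗N}`, acting as `X` on
tensor factors `j` and `k` and as the identity elsewhere. -/
def emb2 (N : ℕ) (j k : Fin N) (X : M4) :
    Matrix (Fin N → Fin 2) (Fin N → Fin 2) ℂ :=
  Matrix.of fun a b => X (a j, a k) (b j, b k) *
    ∏ i : Fin N, if i = j ∨ i = k then 1 else (if a i = b i then 1 else 0)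

/-!
`R⁺(λⱼ - λₖ)_{jk}` is the symmetric R-matrix `R(λⱼ - λₖ)_{jk}` conjugated by the diagonal
gauge `e_a ↦ exp (∑ᵢ λᵢ aᵢ) e_a`, which does not depend on the pair `jk`; so the gauge cancels
in the Yang–Baxter equation for `R⁺` and leaves the one for `R`. The latter is checked entrywise
on `(ℂ²)^{⊗3}`, every nontrivial entry being one of two addition formulas for the weights `b`
and `c`. Finally `R⁻ = (R⁺)ᵀ`, and transposition reverses both sides of the equation.
-/

theorem sinh_add_mul_sinh_add (x y η : ℂ) :
    sinh (x + η) * sinh (y + η) = sinh x * sinh y + sinh η * sinh (x + y + η) := by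
  simp only [Complex.sinh_add, Complex.cosh_add]
  linear_combination (sinh x * sinh y) * Complex.cosh_sq_sub_sinh_sq η

theorem sinh_add_mul_sinh_add' (u v η : ℂ) :
    sinh (u + v) * sinh (v + η) = sinh (u + v + η) * sinh v + sinh η * sinh u := by
  simp only [Complex.sinh_add, Complex.cosh_add]
  linear_combination sinh u * sinh η * Complex.cosh_sq_sub_sinh_sq v

section weights

variable {η u v : ℂ} (hu : sinh (u + η) ≠ 0) (hv : sinh (v + η) ≠ 0)
  (huv : sinh (u + v + η) ≠ 0)
include hu hv huv

theorem cC_add : cC η (u + v) = cC η u * cC η v + bC η u * bC η v * cC η (u + v) := by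
  simp only [bC, cC]
  field_simp
  linear_combination sinh η * sinh_add_mul_sinh_add u v η

theorem bC_add_mul_cC :
    bC η (u + v) * cC η u = cC η u * bC η v + bC η u * cC η v * cC η (u + v) := by
  simp only [bC, cC]
  field_simp
  linear_combination sinh η * sinh_add_mul_sinh_add' u v η

end weights

theorem sum_fin3_fin2 (f : (Fin 3 → Fin 2) → ℂ) :
    ∑ x, f x = f ![0,0,0] + f ![0,0,1] + f ![0,1,0] + f ![0,1,1]
      + f ![1,0,0] + f ![1,0,1] + f ![1,1,0] + f ![1,1,1] := by
  rw [show (univ : Finset (Fin 3 → Fin 2)) =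
    {![0,0,0], ![0,0,1], ![0,1,0], ![0,1,1], ![1,0,0], ![1,0,1], ![1,1,0], ![1,1,1]} by decide]
  simp [Finset.sum_insert, add_assoc]

set_option maxHeartbeats 1000000 in
theorem emb2_Rsym_yangBaxter {η u v : ℂ} (hu : sinh (u + η) ≠ 0) (hv : sinh (v + η) ≠ 0)
    (huv : sinh (u + v + η) ≠ 0) :
    emb2 3 0 1 (Rsym η u) * emb2 3 0 2 (Rsym η (u + v)) * emb2 3 1 2 (Rsym η v) =
      emb2 3 1 2 (Rsym η v) * emb2 3 0 2 (Rsym η (u + v)) * emb2 3 0 1 (Rsym η u) := by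
  have hc := cC_add hu hv huv
  have hbc := bC_add_mul_cC hu hv huv
  have hbc' := bC_add_mul_cC hv hu (by rwa [add_comm v u])
  rw [add_comm v u] at hbc'
  ext a b
  simp only [Matrix.mul_apply, emb2, Matrix.of_apply, Fin.prod_univ_three, sum_fin3_fin2,
    Matrix.cons_val_zero, Matrix.cons_val_one, Matrix.cons_val_two, Matrix.head_cons,
    Matrix.tail_cons]
  generalize a 0 = a₀, a 1 = a₁, a 2 = a₂, b 0 = b₀, b 1 = b₁, b 2 = b₂
  fin_cases a₀ <;> fin_cases a₁ <;> fin_cases a₂ <;> fin_cases b₀ <;> fin_cases b₁ <;>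
    fin_cases b₂ <;>
    simp +decide only [Rsym, Matrix.of_apply, if_true, if_false,
      mul_zero, zero_mul, mul_one, one_mul, add_zero, zero_add] <;>
    first
      | ring1
      | linear_combination hc | linear_combination -hc
      | linear_combination hbc | linear_combination -hbc
      | linear_combination hbc' | linear_combination -hbc'

theorem Rplus_sub_apply (η x y : ℂ) (p q : Fin 2 × Fin 2) :
    Rplus η (x - y) p q =
      cexp (x * ((p.1 : ℂ) - q.1) + y * ((p.2 : ℂ) - q.2)) * Rsym η (x - y) p q := by
  obtain ⟨p₁, p₂⟩ := p
  obtain ⟨q₁, q₂⟩ := q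
  fin_cases p₁ <;> fin_cases p₂ <;> fin_cases q₁ <;> fin_cases q₂ <;>
    simp [Rplus, Rsym, cP, cM, cC, mul_div_assoc, sub_eq_add_neg, add_comm]

theorem Rminus_eq_transpose (η u : ℂ) : Rminus η u = (Rplus η u)ᵀ := by
  ext ⟨p₁, p₂⟩ ⟨q₁, q₂⟩
  fin_cases p₁ <;> fin_cases p₂ <;> fin_cases q₁ <;> fin_cases q₂ <;> simp [Rplus, Rminus]

theorem emb2_transpose (N : ℕ) (j k : Fin N) (X : M4) :
    emb2 N j k Xᵀ = (emb2 N j k X)ᵀ := by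
  ext a b
  simp only [emb2, transpose_apply, of_apply, eq_comm (a := a _)]

def gaugePhase {N : ℕ} (l : Fin N → ℂ) (a : Fin N → Fin 2) : ℂ := ∑ i, l i * (a i : ℂ)

theorem emb2_Rplus_eq_conj {N : ℕ} (l : Fin N → ℂ) {j k : Fin N} (hjk : j ≠ k) (η : ℂ) :
    emb2 N j k (Rplus η (l j - l k)) =
      diagonal (fun a => cexp (gaugePhase l a)) * emb2 N j k (Rsym η (l j - l k)) *
        diagonal (fun a => cexp (-gaugePhase l a)) := by
  ext a b
  rw [mul_diagonal, diagonal_mul]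
  by_cases hab : ∀ i, i ≠ j ∧ i ≠ k → a i = b i
  · have hphase : gaugePhase l a + -gaugePhase l b =
        l j * ((a j : ℂ) - b j) + l k * ((a k : ℂ) - b k) := by
      rw [← sub_eq_add_neg, gaugePhase, gaugePhase, ← Finset.sum_sub_distrib]
      simp only [← mul_sub]
      exact Fintype.sum_eq_add j k hjk fun i hi => by simp [hab i hi]
    simp only [emb2, of_apply, Rplus_sub_apply]
    rw [← hphase, Complex.exp_add]
    ring
  · push Not at hab
    obtain ⟨i, ⟨hij, hik⟩, hi⟩ := hab
    have hprod : ∀ X : M4, emb2 N j k X a b = 0 := fun X =>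
      mul_eq_zero_of_right _ (Finset.prod_eq_zero (Finset.mem_univ i) (by simp [hij, hik, hi]))
    simp [hprod]

theorem mul_conj_mul_conj_mul_conj {R : Type*} [Monoid R] {d d' : R} (h : d' * d = 1)
    (x y z : R) : d * x * d' * (d * y * d') * (d * z * d') = d * (x * y * z) * d' := by
  simp only [mul_assoc, ← mul_assoc d' d, h, one_mul]

theorem diagonal_exp_neg_mul_diagonal_exp {n : Type*} [Fintype n] [DecidableEq n] (f : n → ℂ) :
    diagonal (fun a => cexp (-f a)) * diagonal (fun a => cexp (f a)) = 1 := by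
  simp [diagonal_mul_diagonal, ← Complex.exp_add]

theorem emb2_Rplus_yangBaxter (η : ℂ) (l : Fin 3 → ℂ) (h01 : sinh (l 0 - l 1 + η) ≠ 0)
    (h02 : sinh (l 0 - l 2 + η) ≠ 0) (h12 : sinh (l 1 - l 2 + η) ≠ 0) :
    emb2 3 0 1 (Rplus η (l 0 - l 1)) * emb2 3 0 2 (Rplus η (l 0 - l 2)) *
        emb2 3 1 2 (Rplus η (l 1 - l 2)) =
      emb2 3 1 2 (Rplus η (l 1 - l 2)) * emb2 3 0 2 (Rplus η (l 0 - l 2)) *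
        emb2 3 0 1 (Rplus η (l 0 - l 1)) := by
  have hsplit : l 0 - l 2 = l 0 - l 1 + (l 1 - l 2) := by ring
  simp only [emb2_Rplus_eq_conj l (by decide : (0 : Fin 3) ≠ 1),
    emb2_Rplus_eq_conj l (by decide : (0 : Fin 3) ≠ 2),
    emb2_Rplus_eq_conj l (by decide : (1 : Fin 3) ≠ 2)]
  have hgauge := diagonal_exp_neg_mul_diagonal_exp (gaugePhase l)
  rw [mul_conj_mul_conj_mul_conj hgauge, mul_conj_mul_conj_mul_conj hgauge, hsplit,
    emb2_Rsym_yangBaxter h01 h12 (hsplit ▸ h02)]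

theorem emb2_Rminus_yangBaxter (η : ℂ) (l : Fin 3 → ℂ) (h01 : sinh (l 0 - l 1 + η) ≠ 0)
    (h02 : sinh (l 0 - l 2 + η) ≠ 0) (h12 : sinh (l 1 - l 2 + η) ≠ 0) :
    emb2 3 0 1 (Rminus η (l 0 - l 1)) * emb2 3 0 2 (Rminus η (l 0 - l 2)) *
        emb2 3 1 2 (Rminus η (l 1 - l 2)) =
      emb2 3 1 2 (Rminus η (l 1 - l 2)) * emb2 3 0 2 (Rminus η (l 0 - l 2)) *
        emb2 3 0 1 (Rminus η (l 0 - l 1)) := by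
  simp only [Rminus_eq_transpose, emb2_transpose, ← transpose_mul]
  simpa only [mul_assoc] using congrArg transpose (emb2_Rplus_yangBaxter η l h01 h02 h12).symm

theorem statement1 (η lam1 lam2 lam3 : ℂ)
    (h12 : Complex.sinh (lam1 - lam2 + η) ≠ 0)
    (h13 : Complex.sinh (lam1 - lam3 + η) ≠ 0)
    (h23 : Complex.sinh (lam2 - lam3 + η) ≠ 0) :
    (emb2 3 0 1 (Rplus η (lam1 - lam2)) * emb2 3 0 2 (Rplus η (lam1 - lam3)) *
        emb2 3 1 2 (Rplus η (lam2 - lam3)) =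
      emb2 3 1 2 (Rplus η (lam2 - lam3)) * emb2 3 0 2 (Rplus η (lam1 - lam3)) *
        emb2 3 0 1 (Rplus η (lam1 - lam2))) ∧
    (emb2 3 0 1 (Rminus η (lam1 - lam2)) * emb2 3 0 2 (Rminus η (lam1 - lam3)) *
        emb2 3 1 2 (Rminus η (lam2 - lam3)) =
      emb2 3 1 2 (Rminus η (lam2 - lam3)) * emb2 3 0 2 (Rminus η (lam1 - lam3)) *
        emb2 3 0 1 (Rminus η (lam1 - lam2))) :=
  ⟨emb2_Rplus_yangBaxter η ![lam1, lam2, lam3] h12 h13 h23,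
    emb2_Rminus_yangBaxter η ![lam1, lam2, lam3] h12 h13 h23⟩
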